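/- Let α, β, θ > 0 and λ₁, λ₂ ∈ [−1,1]. Let g : ℝ → ℝ restrict to a continuous strictly increasing bijection of [0,∞) onto [0,∞) with g(0) = 0 and g(x) → ∞ as x → ∞, differentiable on (0,∞) with derivative g′. Let X₁ ∼ GTLD(α,β,θ,λ₁;g) with density f₁ and X₂ ∼ GTLD(α,β,θ,λ₂;g) with CDF F₂. Then the stress–strength reliability satisfies R = ∫₀^∞ f₁(x) F₂(x) dx = (λ₂ − λ₁ + 3)/6. -/

import Mathlib

open Real MeasureTheory Filter Set Topology

/-!
Write `u = (1 - exp (-β g^α))^θ`, a distribution function on `[0, ∞)`. The GTLD with parameter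
`λ` is its quadratic rank transmutation: the CDF is `T_λ(u) = (1 + λ) u - λ u²` and the density is
`u' · T_λ'(u)`. Hence the integrand of `R` is `u' · p(u)` with `p(v) = T_{λ₁}'(v) T_{λ₂}(v)`, the
derivative of `P ∘ u` for the quartic `P` with `P' = p`, `P(0) = 0`. Since the integrand is
nonnegative, hence integrable, the improper fundamental theorem of calculus gives
`R = P(1) - P(0) = ∫₀¹ p = (λ₂ - λ₁ + 3)/6`, whatever the baseline `g`.
-/

lemma HasDerivAt.nonneg_of_monotoneOn_nhds {g : ℝ → ℝ} {g' x : ℝ} {s : Set ℝ}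
    (hd : HasDerivAt g g' x) (hg : MonotoneOn g s) (hs : s ∈ 𝓝 x) : 0 ≤ g' :=
  hd.hasDerivWithinAt.nonneg_of_monotoneOn
    (by simpa using (PerfectSpace.univ_preperfect x (mem_univ x)).nhds_inter hs) hg

def rankTransmute (lam u : ℝ) : ℝ := (1 + lam) * u - lam * u ^ 2

lemma rankTransmute_nonneg {lam u : ℝ} (hlam : lam ∈ Icc (-1 : ℝ) 1) (hu : u ∈ Icc (0 : ℝ) 1) :
    0 ≤ rankTransmute lam u := by
  rw [show rankTransmute lam u = u * (1 + lam * (1 - u)) by unfold rankTransmute; ring]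
  exact mul_nonneg hu.1
    (by nlinarith [mul_nonneg (by linarith [hlam.1] : 0 ≤ 1 + lam) (sub_nonneg.2 hu.2), hu.1])

lemma rankTransmute_deriv_nonneg {lam u : ℝ} (hlam : lam ∈ Icc (-1 : ℝ) 1)
    (hu : u ∈ Icc (0 : ℝ) 1) : 0 ≤ 1 + lam - 2 * lam * u := by
  nlinarith [hlam.1, hlam.2, hu.1, hu.2]

noncomputable def stressStrengthPrimitive (lam₁ lam₂ u : ℝ) : ℝ :=
  (1 + lam₁) * (1 + lam₂) / 2 * u ^ 2
    - ((1 + lam₁) * lam₂ + 2 * lam₁ * (1 + lam₂)) / 3 * u ^ 3 + lam₁ * lam₂ / 2 * u ^ 4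

lemma hasDerivAt_stressStrengthPrimitive (lam₁ lam₂ u : ℝ) :
    HasDerivAt (stressStrengthPrimitive lam₁ lam₂)
      ((1 + lam₁ - 2 * lam₁ * u) * rankTransmute lam₂ u) u := by
  have := (((hasDerivAt_pow 2 u).const_mul ((1 + lam₁) * (1 + lam₂) / 2)).sub
    ((hasDerivAt_pow 3 u).const_mul (((1 + lam₁) * lam₂ + 2 * lam₁ * (1 + lam₂)) / 3))).add
    ((hasDerivAt_pow 4 u).const_mul (lam₁ * lam₂ / 2))
  exact this.congr_deriv (by simp only [rankTransmute]; push_cast; ring)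

theorem integral_rankTransmuted_stress_strength {u u' : ℝ → ℝ} {a lam₁ lam₂ : ℝ}
    (hlam₁ : lam₁ ∈ Icc (-1 : ℝ) 1) (hlam₂ : lam₂ ∈ Icc (-1 : ℝ) 1)
    (hua : u a = 0) (hcont : ContinuousWithinAt u (Ici a) a)
    (hderiv : ∀ x ∈ Ioi a, HasDerivAt u (u' x) x) (hu'_nonneg : ∀ x ∈ Ioi a, 0 ≤ u' x)
    (hu_mem : ∀ x ∈ Ioi a, u x ∈ Icc (0 : ℝ) 1) (htop : Tendsto u atTop (𝓝 1)) :
    ∫ x in Ioi a, u' x * (1 + lam₁ - 2 * lam₁ * u x) * rankTransmute lam₂ (u x) =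
      (lam₂ - lam₁ + 3) / 6 := by
  have hP : Continuous (stressStrengthPrimitive lam₁ lam₂) := continuous_iff_continuousAt.2
    fun v => (hasDerivAt_stressStrengthPrimitive lam₁ lam₂ v).continuousAt
  rw [integral_Ioi_of_hasDerivAt_of_nonneg (g := stressStrengthPrimitive lam₁ lam₂ ∘ u)
    (hP.continuousAt.comp_continuousWithinAt hcont)
    (fun x hx => ((hasDerivAt_stressStrengthPrimitive lam₁ lam₂ (u x)).comp x
      (hderiv x hx)).congr_deriv (by ring))
    (fun x hx => mul_nonneg (mul_nonneg (hu'_nonneg x hx)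
      (rankTransmute_deriv_nonneg hlam₁ (hu_mem x hx))) (rankTransmute_nonneg hlam₂ (hu_mem x hx)))
    (hP.continuousAt.tendsto.comp htop)]
  simp only [Function.comp, hua, stressStrengthPrimitive]
  ring

noncomputable def gtldBaseCDF (α β θ : ℝ) (g : ℝ → ℝ) (x : ℝ) : ℝ :=
  (1 - exp (-β * g x ^ α)) ^ θ

noncomputable def gtldBaseDensity (α β θ : ℝ) (g g' : ℝ → ℝ) (x : ℝ) : ℝ :=
  θ * α * β * g x ^ (α - 1) * g' x * exp (-β * g x ^ α) * (1 - exp (-β * g x ^ α)) ^ (θ - 1)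

section GTLDBase

variable {α β θ : ℝ} {g g' : ℝ → ℝ} {x : ℝ}

lemma one_sub_exp_neg_mem_Ico (hβ : 0 ≤ β) (hgx : 0 ≤ g x) :
    1 - exp (-β * g x ^ α) ∈ Ico (0 : ℝ) 1 := by
  have : 0 ≤ β * g x ^ α := mul_nonneg hβ (rpow_nonneg hgx α)
  constructor
  · linarith [exp_le_one_iff.2 (by linarith : -β * g x ^ α ≤ 0)]
  · linarith [exp_pos (-β * g x ^ α)]

lemma gtldBaseCDF_mem_Icc (hβ : 0 ≤ β) (hθ : 0 ≤ θ) (hgx : 0 ≤ g x) :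
    gtldBaseCDF α β θ g x ∈ Icc (0 : ℝ) 1 :=
  have h := one_sub_exp_neg_mem_Ico (α := α) hβ hgx
  ⟨rpow_nonneg h.1 θ, rpow_le_one h.1 h.2.le hθ⟩

lemma gtldBaseCDF_of_eq_zero (hα : 0 < α) (hθ : 0 < θ) (hgx : g x = 0) :
    gtldBaseCDF α β θ g x = 0 := by
  simp [gtldBaseCDF, hgx, zero_rpow hα.ne', zero_rpow hθ.ne']

lemma continuousWithinAt_gtldBaseCDF {s : Set ℝ} (hα : 0 ≤ α) (hθ : 0 ≤ θ)
    (hg : ContinuousWithinAt g s x) :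
    ContinuousWithinAt (gtldBaseCDF α β θ g) s x := by
  have hgα : ContinuousWithinAt (fun y => g y ^ α) s x :=
    hg.rpow_const (Or.inr hα)
  exact (continuousWithinAt_const.sub (hgα.const_mul (-β)).rexp).rpow_const (Or.inr hθ)

lemma tendsto_gtldBaseCDF_atTop (hα : 0 < α) (hβ : 0 < β) (hg : Tendsto g atTop atTop) :
    Tendsto (gtldBaseCDF α β θ g) atTop (𝓝 1) := by
  have hexp : Tendsto (fun x => exp (-β * g x ^ α)) atTop (𝓝 0) := by
    simpa only [neg_mul, Function.comp_def] using tendsto_exp_neg_atTop_nhds_zero.comp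
      (((tendsto_rpow_atTop hα).comp hg).const_mul_atTop hβ)
  have h := ((tendsto_const_nhds (x := (1 : ℝ))).sub hexp).rpow_const (p := θ)
    (Or.inl (by norm_num))
  rwa [sub_zero, one_rpow] at h

lemma hasDerivAt_gtldBaseCDF (hβ : 0 < β) (hgx : 0 < g x) (hg : HasDerivAt g (g' x) x) :
    HasDerivAt (gtldBaseCDF α β θ g) (gtldBaseDensity α β θ g g' x) x := by
  have hbase : 0 < 1 - exp (-β * g x ^ α) := by
    have := mul_pos hβ (rpow_pos_of_pos hgx α)
    linarith [exp_lt_one_iff.2 (by linarith : -β * g x ^ α < 0)]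
  have h := ((((hg.rpow_const (p := α) (Or.inl hgx.ne')).const_mul (-β)).exp).const_sub
    1).rpow_const (p := θ) (Or.inl hbase.ne')
  exact h.congr_deriv (by unfold gtldBaseDensity; ring)

lemma gtldBaseDensity_nonneg (hα : 0 ≤ α) (hβ : 0 ≤ β) (hθ : 0 ≤ θ) (hgx : 0 < g x)
    (hg'x : 0 ≤ g' x) : 0 ≤ gtldBaseDensity α β θ g g' x := by
  have := (one_sub_exp_neg_mem_Ico (α := α) hβ hgx.le).1
  unfold gtldBaseDensity
  positivity

end GTLDBase

theorem gtld_stress_strength (α β θ lam1 lam2 : ℝ) (g g' : ℝ → ℝ)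
    (hα : 0 < α) (hβ : 0 < β) (hθ : 0 < θ)
    (hlam1 : lam1 ∈ Set.Icc (-1 : ℝ) 1) (hlam2 : lam2 ∈ Set.Icc (-1 : ℝ) 1)
    (hg_mono : StrictMonoOn g (Set.Ici 0))
    (hg_cont : ContinuousOn g (Set.Ici 0))
    (hg0 : g 0 = 0)
    (hg_top : Tendsto g atTop atTop)
    (hg_deriv : ∀ x ∈ Set.Ioi (0 : ℝ), HasDerivAt g (g' x) x) :
    ∫ x in Set.Ioi (0 : ℝ),
        (θ * α * β * g x ^ (α - 1) * g' x * Real.exp (-β * g x ^ α) *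
          (1 - Real.exp (-β * g x ^ α)) ^ (θ - 1) *
          (1 + lam1 - 2 * lam1 * (1 - Real.exp (-β * g x ^ α)) ^ θ)) *
        ((1 + lam2) * (1 - Real.exp (-β * g x ^ α)) ^ θ
          - lam2 * (1 - Real.exp (-β * g x ^ α)) ^ (2 * θ)) =
      (lam2 - lam1 + 3) / 6 := by
  have hg_pos : ∀ x ∈ Ioi (0 : ℝ), 0 < g x := fun x hx =>
    hg0 ▸ hg_mono self_mem_Ici (mem_Ici.2 (le_of_lt hx)) hx
  have hg'_nonneg : ∀ x ∈ Ioi (0 : ℝ), 0 ≤ g' x := fun x hx =>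
    (hg_deriv x hx).nonneg_of_monotoneOn_nhds hg_mono.monotoneOn (Ici_mem_nhds hx)
  rw [← integral_rankTransmuted_stress_strength (u := gtldBaseCDF α β θ g)
    (u' := gtldBaseDensity α β θ g g') hlam1 hlam2 (gtldBaseCDF_of_eq_zero hα hθ hg0)
    (continuousWithinAt_gtldBaseCDF hα.le hθ.le (hg_cont 0 self_mem_Ici))
    (fun x hx => hasDerivAt_gtldBaseCDF hβ (hg_pos x hx) (hg_deriv x hx))
    (fun x hx => gtldBaseDensity_nonneg hα.le hβ.le hθ.le (hg_pos x hx) (hg'_nonneg x hx))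
    (fun x hx => gtldBaseCDF_mem_Icc hβ.le hθ.le (hg_pos x hx).le)
    (tendsto_gtldBaseCDF_atTop hα hβ hg_top)]
  refine setIntegral_congr_fun measurableSet_Ioi fun x hx => ?_
  have hbase := (one_sub_exp_neg_mem_Ico (α := α) hβ.le (hg_pos x hx).le).1
  simp only [gtldBaseDensity, gtldBaseCDF, rankTransmute]
  rw [mul_comm 2 θ, rpow_mul hbase, rpow_two]
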